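/- arXiv:1409.5565 — 2 statements merged into one kernel-verified Lean document; each statement's English description precedes it below -/
import Mathlib

section
/- Let e ∈ S be an idempotent, H_{e'} = {h ∈ H : he = eh = e}, and let λ ∈ J^* satisfy λ(x) = λ(exe) for all x ∈ J. Then G_λ = {h + x : h ∈ H_{e'}, x ∈ J, λ(xu) = 0 for all u ∈ J} is a subgroup of the unit group G = A^×, and for every group homomorphism θ : H_{e'} → ℂ^× and every nontrivial homomorphism ε from the additive group of F_q to ℂ^×, the map ξ_{θ,λ} : G_λ → ℂ^× given by ξ_{θ,λ}(h + x) = θ(h)·ε(λ(x)) (well defined since A = S ⊕ J) is a group homomorphism. -/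
/-- `h ∈ H = S^×`: `h` lies in `S` and is invertible with inverse in `S`. -/
def MemH {F A : Type*} [Field F] [Ring A] [Algebra F A]
    (S : Subalgebra F A) (h : A) : Prop :=
  h ∈ S ∧ ∃ h' ∈ S, h * h' = 1 ∧ h' * h = 1

/-- `h ∈ H_{e'} = {h ∈ H : h * e = e * h = e}`. -/
def MemHePrime {F A : Type*} [Field F] [Ring A] [Algebra F A]
    (S : Subalgebra F A) (e h : A) : Prop :=
  MemH S h ∧ h * e = e ∧ e * h = e

/-- The set `G_λ = {h + x : h ∈ H_{e'}, x ∈ J, λ(xu) = 0 for all u ∈ J}`. -/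
def GlamSet {F A : Type*} [Field F] [Ring A] [Algebra F A]
    (J : Ideal A) (hJr : ∀ x ∈ J, ∀ a : A, x * a ∈ J) (S : Subalgebra F A) (e : A)
    (lam : (Submodule.restrictScalars F J) →ₗ[F] F) : Set A :=
  {g | ∃ h x : A, MemHePrime S e h ∧
    (∃ hx : x ∈ J, ∀ u (hu : u ∈ J), lam ⟨x * u, hJr x hx u⟩ = 0) ∧ g = h + x}

/-- In any ring, `1 + x` is a (two-sided) unit when `x` is in the Jacobson radical. -/
lemma aux_jacobson_unit {A : Type*} [Ring A] (x : A)
    (hx : x ∈ ((⊥ : Ideal A)).jacobson) : ∃ y, (1 + x) * y = 1 ∧ y * (1 + x) = 1 := by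
  have hleft : ∀ z : A, z ∈ ((⊥ : Ideal A)).jacobson → ∃ y, y * (1 + z) = 1 := by
    intro z hz
    by_cases hI : Ideal.span {1 + z} = (⊤ : Ideal A)
    · have h1 : (1 : A) ∈ Ideal.span {1 + z} := hI ▸ trivial
      obtain ⟨r, hr⟩ := Submodule.mem_span_singleton.mp h1
      exact ⟨r, by simpa [smul_eq_mul] using hr⟩
    · exfalso
      obtain ⟨m, hm, hle⟩ := Ideal.exists_le_maximal _ hI
      have hzm : z ∈ m := Ideal.mem_sInf.mp hz ⟨bot_le, hm⟩
      have h1m : (1 + z) ∈ m := hle (Ideal.subset_span rfl)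
      have : (1 : A) ∈ m := by simpa using m.sub_mem h1m hzm
      exact hm.ne_top ((Ideal.eq_top_iff_one m).mpr this)
  obtain ⟨y, hy⟩ := hleft x hx
  have hyx : (-(y * x)) ∈ ((⊥ : Ideal A)).jacobson :=
    neg_mem (Ideal.mul_mem_left _ y hx)
  obtain ⟨z, hz⟩ := hleft _ hyx
  have hy' : y = 1 + -(y * x) := by
    have : y * 1 + y * x = 1 := by rw [← mul_add]; exact hy
    rw [mul_one] at this
    linear_combination (norm := noncomm_ring) this
  have hzy : z * y = 1 := by rw [hy']; exact hz
  have hz1 : z = 1 + x := by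
    calc z = z * (y * (1 + x)) := by rw [hy, mul_one]
    _ = (z * y) * (1 + x) := by rw [mul_assoc]
    _ = 1 + x := by rw [hzy, one_mul]
  exact ⟨y, by rw [← hz1]; exact hzy, hy⟩

/-- Proposition: `G_λ` is a subgroup of `G = A^×` and `ξ_{θ,λ}(h+x) = θ(h)·ε(λ(x))` is a
linear character (a homomorphism `G_λ → ℂ^×`). -/
theorem Glam_subgroup_and_xi_hom
    {F A : Type*} [Field F] [Fintype F] [Ring A] [Algebra F A] [FiniteDimensional F A]
    (J : Ideal A) (hJ : J = (⊥ : Ideal A).jacobson)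
    (hJr : ∀ x ∈ J, ∀ a : A, x * a ∈ J)
    (hred : ∀ a b : A, a * b - b * a ∈ J)
    (S : Subalgebra F A)
    (hS : IsCompl (Subalgebra.toSubmodule S) (Submodule.restrictScalars F J))
    (e : A) (he : IsIdempotentElem e) (heS : e ∈ S)
    (lam : (Submodule.restrictScalars F J) →ₗ[F] F)
    (hlam : ∀ x (hx : x ∈ J), lam ⟨x, hx⟩ = lam ⟨e * x * e, hJr _ (J.mul_mem_left e hx) e⟩)
    (θ : A → ℂ)
    (hθmul : ∀ h h' : A, MemHePrime S e h → MemHePrime S e h' → θ (h * h') = θ h * θ h')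
    (hθne : ∀ h : A, MemHePrime S e h → θ h ≠ 0)
    (ε : F → ℂ) (hεadd : ∀ a b : F, ε (a + b) = ε a * ε b) (hε0 : ε 0 = 1)
    (hεnt : ∃ a : F, ε a ≠ 1) :
    -- `G_λ` is a subgroup of `G = A^×`:
    ((1 : A) ∈ GlamSet J hJr S e lam ∧
     (∀ g ∈ GlamSet J hJr S e lam, IsUnit g) ∧
     (∀ g ∈ GlamSet J hJr S e lam, ∀ g' ∈ GlamSet J hJr S e lam,
        g * g' ∈ GlamSet J hJr S e lam) ∧
     (∀ g ∈ GlamSet J hJr S e lam, ∀ g' : A, g * g' = 1 → g' * g = 1 →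
        g' ∈ GlamSet J hJr S e lam)) ∧
    -- `ξ_{θ,λ}` takes values in `ℂ^×`:
    (∀ h x : A, MemHePrime S e h → ∀ hx : x ∈ J,
        θ h * ε (lam ⟨x, hx⟩) ≠ 0) ∧
    -- `ξ_{θ,λ}` is multiplicative on `G_λ`:
    (∀ h x h' x' h'' x'' : A,
      MemHePrime S e h → MemHePrime S e h' → MemHePrime S e h'' →
      ∀ (hx : x ∈ J) (hx' : x' ∈ J) (hx'' : x'' ∈ J),
      (∀ u (hu : u ∈ J), lam ⟨x * u, hJr x hx u⟩ = 0) →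
      (∀ u (hu : u ∈ J), lam ⟨x' * u, hJr x' hx' u⟩ = 0) →
      (∀ u (hu : u ∈ J), lam ⟨x'' * u, hJr x'' hx'' u⟩ = 0) →
      (h + x) * (h' + x') = h'' + x'' →
      θ h'' * ε (lam ⟨x'', hx''⟩) =
        (θ h * ε (lam ⟨x, hx⟩)) * (θ h' * ε (lam ⟨x', hx'⟩))) := by
  classical
  -- An extension of `λ` to all of `A` (by zero outside `J`), to ease rewriting.
  set L : A → F := fun a => if h : a ∈ J then lam ⟨a, h⟩ else 0 with hLdef
  have hL : ∀ x (hx : x ∈ J), lam ⟨x, hx⟩ = L x := by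
    intro x hx
    simp only [hLdef]
    rw [dif_pos hx]
  have hLadd : ∀ x y, x ∈ J → y ∈ J → L (x + y) = L x + L y := by
    intro x y hx hy
    rw [← hL x hx, ← hL y hy, ← hL (x + y) (add_mem hx hy)]
    have h2 : (⟨x + y, add_mem hx hy⟩ : Submodule.restrictScalars F J) = ⟨x, hx⟩ + ⟨y, hy⟩ := rfl
    rw [h2, map_add]
  have hLneg : ∀ x, x ∈ J → L (-x) = - L x := by
    intro x hx
    rw [← hL x hx, ← hL (-x) (neg_mem hx)]
    have h2 : (⟨-x, neg_mem hx⟩ : Submodule.restrictScalars F J) = -⟨x, hx⟩ := rfl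
    rw [h2, map_neg]
  have hsand : ∀ z, z ∈ J → L z = L (e * z * e) := by
    intro z hz
    rw [← hL z hz, ← hL _ (hJr _ (J.mul_mem_left e hz) e)]
    exact hlam z hz
  have key : ∀ a xx b : A, e * a = e → ∀ hxx : xx ∈ J, (∀ u, u ∈ J → L (xx * u) = 0) →
      b ∈ J → L (a * (xx * b)) = 0 := by
    intro a xx b hea hxx horth hb
    have h1 : L (a * (xx * b)) = L (e * (a * (xx * b)) * e) :=
      hsand _ (J.mul_mem_left a (hJr xx hxx b))
    have h2 : e * (a * (xx * b)) * e = e * (xx * (b * e)) * e := by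
      simp only [mul_assoc]
      rw [← mul_assoc e a, hea]
      rw [he.eq]
    rw [h1, h2, ← hsand _ (hJr xx hxx (b * e))]
    exact horth (b * e) (hJr b hb e)
  have keyL : ∀ a z : A, z ∈ J → e * a = e → L (a * z) = L z := by
    intro a z hz hea
    have h1 : L (a * z) = L (e * (a * z) * e) := hsand _ (J.mul_mem_left a hz)
    have h2 : e * (a * z) * e = e * z * e := by rw [← mul_assoc e a, hea]
    rw [h1, h2, ← hsand z hz]
  have keyR : ∀ a z : A, z ∈ J → a * e = e → L (z * a) = L z := by
    intro a z hz hae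
    have h1 : L (z * a) = L (e * (z * a) * e) := hsand _ (hJr z hz a)
    have h2 : e * (z * a) * e = e * z * e := by
      simp only [mul_assoc]
      rw [hae]
    rw [h1, h2, ← hsand z hz]
  have hεne : ∀ a : F, ε a ≠ 0 := by
    intro a
    have h1 : ε a * ε (-a) = 1 := by rw [← hεadd, add_neg_cancel, hε0]
    exact left_ne_zero_of_mul_eq_one h1
  have hmulHe : ∀ h h', MemHePrime S e h → MemHePrime S e h' → MemHePrime S e (h * h') := by
    rintro h h' ⟨⟨hhS, k, hkS, hk1, hk2⟩, hhe, heh⟩ ⟨⟨hh'S, k', hk'S, hk'1, hk'2⟩, hh'e, heh'⟩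
    refine ⟨⟨S.mul_mem hhS hh'S, k' * k, S.mul_mem hk'S hkS, ?_, ?_⟩, ?_, ?_⟩
    · calc h * h' * (k' * k) = h * (h' * k') * k := by simp only [mul_assoc]
        _ = 1 := by rw [hk'1, mul_one, hk1]
    · calc k' * k * (h * h') = k' * (k * h) * h' := by simp only [mul_assoc]
        _ = 1 := by rw [hk2, mul_one, hk'2]
    · rw [mul_assoc, hh'e, hhe]
    · rw [← mul_assoc, heh, heh']
  refine ⟨⟨?_, ?_, ?_, ?_⟩, ?_, ?_⟩
  · -- 1 ∈ G_λ
    refine ⟨1, 0, ⟨⟨S.one_mem, 1, S.one_mem, one_mul 1, one_mul 1⟩, one_mul e, mul_one e⟩,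
      ⟨J.zero_mem, fun u hu => ?_⟩, (add_zero 1).symm⟩
    have h2 : (⟨0 * u, hJr 0 J.zero_mem u⟩ : Submodule.restrictScalars F J) = 0 :=
      Subtype.ext (zero_mul u)
    rw [h2, map_zero]
  · -- elements of G_λ are units
    rintro g ⟨h, x, ⟨⟨hhS, k, hkS, hk1, hk2⟩, hhe, heh⟩, ⟨hx, -⟩, rfl⟩
    have hkx : k * x ∈ J := J.mul_mem_left k hx
    obtain ⟨y, hy1, hy2⟩ := aux_jacobson_unit (k * x) (hJ ▸ hkx)
    have hfac : h + x = h * (1 + k * x) := by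
      rw [mul_add, mul_one, ← mul_assoc, hk1, one_mul]
    refine ⟨⟨h + x, y * k, ?_, ?_⟩, rfl⟩
    · rw [hfac, mul_assoc, ← mul_assoc (1 + k * x), hy1, one_mul, hk1]
    · rw [hfac, ← mul_assoc, mul_assoc y k h, hk2, mul_one, hy2]
  · -- closure under multiplication
    rintro g ⟨h, x, hh, ⟨hx, horth⟩, rfl⟩ g' ⟨h', x', hh', ⟨hx', horth'⟩, rfl⟩
    have horthL : ∀ u, u ∈ J → L (x * u) = 0 := fun u hu => by
      rw [← hL _ (hJr x hx u)]; exact horth u hu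
    have horthL' : ∀ u, u ∈ J → L (x' * u) = 0 := fun u hu => by
      rw [← hL _ (hJr x' hx' u)]; exact horth' u hu
    have hm1 : h * x' ∈ J := J.mul_mem_left h hx'
    have hm2 : x * h' + x * x' ∈ J := add_mem (hJr x hx h') (hJr x hx x')
    refine ⟨h * h', h * x' + (x * h' + x * x'), hmulHe h h' hh hh',
      ⟨add_mem hm1 hm2, fun u hu => ?_⟩, ?_⟩
    · rw [hL]
      have hrw : (h * x' + (x * h' + x * x')) * u
          = h * (x' * u) + (x * (h' * u) + x * (x' * u)) := by noncomm_ring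
      rw [hrw, hLadd _ _ (J.mul_mem_left h (hJr x' hx' u))
          (add_mem (J.mul_mem_left x (J.mul_mem_left h' hu)) (J.mul_mem_left x (hJr x' hx' u))),
        hLadd _ _ (J.mul_mem_left x (J.mul_mem_left h' hu)) (J.mul_mem_left x (hJr x' hx' u)),
        key h x' u hh.2.2 hx' horthL' hu,
        horthL _ (J.mul_mem_left h' hu), horthL _ (hJr x' hx' u)]
      simp
    · noncomm_ring
  · -- closure under inverses
    rintro g ⟨h, x, ⟨⟨hhS, k, hkS, hk1, hk2⟩, hhe, heh⟩, ⟨hx, horth⟩, rfl⟩ g' hg1 hg2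
    have horthL : ∀ u, u ∈ J → L (x * u) = 0 := fun u hu => by
      rw [← hL _ (hJr x hx u)]; exact horth u hu
    have hke : k * e = e := by
      calc k * e = k * (h * e) := by rw [hhe]
        _ = (k * h) * e := (mul_assoc k h e).symm
        _ = e := by rw [hk2, one_mul]
    have hek : e * k = e := by
      calc e * k = (e * h) * k := by rw [heh]
        _ = e * (h * k) := mul_assoc e h k
        _ = e := by rw [hk1, mul_one]
    have heq1 : h * g' + x * g' = 1 := by rw [← add_mul]; exact hg1
    have heq2 : g' + k * (x * g') = k := by
      calc g' + k * (x * g') = k * (h * g') + k * (x * g') := by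
            rw [← mul_assoc k h g', hk2, one_mul]
        _ = k * (h * g' + x * g') := (mul_add k _ _).symm
        _ = k := by rw [heq1, mul_one]
    have hyval : g' - k = -(k * (x * g')) := by
      conv_lhs => rw [← heq2]
      abel
    have hyJ : g' - k ∈ J := by
      rw [hyval]; exact neg_mem (J.mul_mem_left k (hJr x hx g'))
    refine ⟨k, g' - k, ⟨⟨hkS, h, hhS, hk2, hk1⟩, hke, hek⟩, ⟨hyJ, fun u hu => ?_⟩, ?_⟩
    · rw [hL]
      have hrw : (g' - k) * u = -(k * (x * (g' * u))) := by
        rw [hyval]; noncomm_ring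
      rw [hrw, hLneg _ (J.mul_mem_left k (J.mul_mem_left x (J.mul_mem_left g' hu))),
        key k x (g' * u) hek hx horthL (J.mul_mem_left g' hu), neg_zero]
    · abel
  · -- values are nonzero
    intro h x hh hx
    exact mul_ne_zero (hθne h hh) (hεne _)
  · -- multiplicativity
    intro h x h' x' h'' x'' hh hh' hh'' hx hx' hx'' horth horth' horth'' heq
    have horthL : ∀ u, u ∈ J → L (x * u) = 0 := fun u hu => by
      rw [← hL _ (hJr x hx u)]; exact horth u hu
    have hexp : h * h' + (h * x' + (x * h' + x * x')) = h'' + x'' := by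
      rw [← heq]; noncomm_ring
    have hT : x'' - (h * x' + (x * h' + x * x')) = h * h' - h'' := by
      have h0 : (h * h' - h'') - (x'' - (h * x' + (x * h' + x * x')))
          = (h * h' + (h * x' + (x * h' + x * x'))) - (h'' + x'') := by abel
      rw [hexp, sub_self] at h0
      exact (sub_eq_zero.mp h0).symm
    have hsS : h * h' - h'' ∈ Subalgebra.toSubmodule S :=
      S.sub_mem (S.mul_mem hh.1.1 hh'.1.1) hh''.1.1
    have hsJ : h * h' - h'' ∈ Submodule.restrictScalars F J := by
      rw [← hT]
      exact sub_mem hx'' (add_mem (J.mul_mem_left h hx')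
        (add_mem (hJr x hx h') (hJr x hx x')))
    have hs0 : h * h' - h'' = 0 := Submodule.disjoint_def.mp hS.disjoint _ hsS hsJ
    have hh''eq : h'' = h * h' := (sub_eq_zero.mp hs0).symm
    have hx''eq : x'' = h * x' + (x * h' + x * x') := by
      have h1 : x'' - (h * x' + (x * h' + x * x')) = 0 := by rw [hT, hs0]
      exact sub_eq_zero.mp h1
    rw [hh''eq, hθmul h h' hh hh', hL _ hx'', hL _ hx, hL _ hx', hx''eq,
      hLadd _ _ (J.mul_mem_left h hx') (add_mem (hJr x hx h') (hJr x hx x')),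
      hLadd _ _ (hJr x hx h') (hJr x hx x'),
      keyL h x' hx' hh.2.2, keyR h' x hx hh'.2.1, horthL x' hx', add_zero, hεadd]
    ring
end

section
/- Let D be a basic subset. Then: (1) x_D is regular in J, i.e. there is no idempotent e ∈ A with e ≠ 1 and e·x_D = x_D·e = x_D, if and only if row(D) ∪ col(D) = {1, …, n}; (2) λ_D is regular in J^*, i.e. there is no idempotent e ∈ A with e ≠ 1 such that λ_D(x) = λ_D(exe) for all x ∈ J, if and only if row(D) ∪ col(D) = {1, …, n}. -/
/-!
If some index `k` lies in no root of `D`, the diagonal idempotent `1 - E_kk` fixes `x_D` on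
both sides and fixes `λ_D`, so neither is regular. Conversely, an upper triangular idempotent
with all diagonal entries `1` is invertible, hence equal to `1`; so it suffices to show
`e_kk = 1` for every index `k` covered by `D`. For `x_D` this is read off the entry of
`e x_D = x_D` (or `x_D e = x_D`) at the root through `k`. For `λ_D`, testing the invariance on
`E_ij` gives `∑_{(a,b) ∈ D} e_ai e_jb = [(i,j) ∈ D]` for `i < j`. Treating the roots `(c,d)`
by decreasing `d`, the roots enclosing `(c,d)` contribute nothing to this sum at `(c,d)`, which
gives `e_cc e_dd = 1`, and the sum at the root `(a,d) ∉ D` gives `e_ca = 0` for every root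
`(a,b)` with `b < d`, which is what the roots nested inside `(c,d)` need in turn.
-/

open Matrix

/-- A matrix lies in `t(n,F)` (upper triangular). -/
def IsUT {F : Type*} [Semiring F] {n : ℕ} (g : Matrix (Fin n) (Fin n) F) : Prop :=
  ∀ i j : Fin n, j < i → g i j = 0

/-- A matrix lies in `J = n(n,F)` (strictly upper triangular). -/
def IsStrictUT {F : Type*} [Semiring F] {n : ℕ} (x : Matrix (Fin n) (Fin n) F) : Prop :=
  ∀ i j : Fin n, j ≤ i → x i j = 0

/-- `D` is a basic subset: a set of positive roots `(i,j)`, `i < j`, with at most one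
element in each row and at most one element in each column. -/
def IsBasic {n : ℕ} (D : Finset (Fin n × Fin n)) : Prop :=
  (∀ p ∈ D, p.1 < p.2) ∧ (∀ p ∈ D, ∀ q ∈ D, p.1 = q.1 → p = q) ∧
    (∀ p ∈ D, ∀ q ∈ D, p.2 = q.2 → p = q)

/-- `x_D = Σ_{(i,j) ∈ D} E_{ij}`. -/
def xBasic {F : Type*} [Semiring F] [DecidableEq F] {n : ℕ}
    (D : Finset (Fin n × Fin n)) : Matrix (Fin n) (Fin n) F :=
  ∑ p ∈ D, Matrix.single p.1 p.2 1

/-- `λ_D(x) = Σ_{(i,j) ∈ D} x_{ij}`. -/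
def lamBasic {F : Type*} [Semiring F] {n : ℕ} (D : Finset (Fin n × Fin n))
    (x : Matrix (Fin n) (Fin n) F) : F :=
  ∑ p ∈ D, x p.1 p.2

section

variable {R : Type*} {n : ℕ}

section UpperTriangular

lemma IsUT.mul_apply_self [Semiring R] {a b : Matrix (Fin n) (Fin n) R} (ha : IsUT a)
    (hb : IsUT b) (k : Fin n) : (a * b) k k = a k k * b k k := by
  refine Fintype.sum_eq_single k fun m hm => ?_
  rcases hm.lt_or_gt with hmk | hkm
  · exact mul_eq_zero_of_left (ha k m hmk) _
  · exact mul_eq_zero_of_right _ (hb m k hkm)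

variable [CommRing R] {e : Matrix (Fin n) (Fin n) R}

lemma IsUT.eq_one_of_isIdempotentElem (he : IsUT e) (hidem : IsIdempotentElem e)
    (hdiag : ∀ k, e k k = 1) : e = 1 := by
  have hdet : e.det = 1 := by
    rw [det_of_isUpperTriangular he, Finset.prod_eq_one fun k _ => hdiag k]
  exact (IsIdempotentElem.iff_eq_one_of_isUnit
    ((isUnit_iff_isUnit_det e).2 (hdet ▸ isUnit_one))).1 hidem

lemma IsUT.apply_self_eq_one_of_mul_eq_one (he : IsUT e) (hidem : IsIdempotentElem e)
    {k l : Fin n} (h : e k k * e l l = 1) : e k k = 1 := by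
  have hk : IsIdempotentElem (e k k) := by
    rw [IsIdempotentElem, ← he.mul_apply_self he, hidem.eq]
  exact (IsIdempotentElem.iff_eq_one_of_isUnit (IsUnit.of_mul_eq_one _ h)).1 hk

end UpperTriangular

section BasicSubset

variable [Semiring R] {D : Finset (Fin n × Fin n)}

lemma xBasic_apply [DecidableEq R] (D : Finset (Fin n × Fin n)) (i j : Fin n) :
    xBasic (F := R) D i j = if (i, j) ∈ D then 1 else 0 := by
  rw [xBasic, Matrix.sum_apply]
  simp_rw [single_apply, ← Prod.mk_inj, Finset.sum_ite_eq']

lemma mul_xBasic_apply_of_mem [DecidableEq R] (hD : IsBasic D) {a b : Fin n}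
    (hab : (a, b) ∈ D) (M : Matrix (Fin n) (Fin n) R) (i : Fin n) :
    (M * xBasic D : Matrix (Fin n) (Fin n) R) i b = M i a := by
  rw [mul_apply, Fintype.sum_eq_single a fun m hm => ?_, xBasic_apply, if_pos hab, mul_one]
  rw [xBasic_apply, if_neg fun hmb => hm (congrArg Prod.fst (hD.2.2 (m, b) hmb _ hab rfl)),
    mul_zero]

lemma xBasic_mul_apply_of_mem [DecidableEq R] (hD : IsBasic D) {a b : Fin n}
    (hab : (a, b) ∈ D) (M : Matrix (Fin n) (Fin n) R) (j : Fin n) :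
    (xBasic D * M : Matrix (Fin n) (Fin n) R) a j = M b j := by
  rw [mul_apply, Fintype.sum_eq_single b fun m hm => ?_, xBasic_apply, if_pos hab, one_mul]
  rw [xBasic_apply, if_neg fun ham => hm (congrArg Prod.snd (hD.2.1 (a, m) ham _ hab rfl)),
    zero_mul]

lemma diagonal_mul_xBasic [DecidableEq R] {d : Fin n → R}
    (hd : ∀ p ∈ D, d p.1 = 1) : diagonal d * xBasic D = xBasic D := by
  ext i j
  rw [diagonal_mul, xBasic_apply]
  split_ifs with hij
  · rw [hd _ hij, one_mul]
  · rw [mul_zero]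

lemma xBasic_mul_diagonal [DecidableEq R] {d : Fin n → R}
    (hd : ∀ p ∈ D, d p.2 = 1) : xBasic D * diagonal d = xBasic D := by
  ext i j
  rw [mul_diagonal, xBasic_apply]
  split_ifs with hij
  · rw [hd _ hij, mul_one]
  · rw [zero_mul]

lemma lamBasic_diagonal_mul_mul_diagonal {d : Fin n → R}
    (hd : ∀ p ∈ D, d p.1 = 1 ∧ d p.2 = 1) (x : Matrix (Fin n) (Fin n) R) :
    lamBasic D (diagonal d * x * diagonal d) = lamBasic D x :=
  Finset.sum_congr rfl fun p hp => by
    rw [mul_diagonal, diagonal_mul, (hd p hp).1, (hd p hp).2, one_mul, mul_one]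

lemma lamBasic_single (D : Finset (Fin n × Fin n)) (i j : Fin n) :
    lamBasic D (single i j (1 : R)) = if (i, j) ∈ D then 1 else 0 := by
  simp_rw [lamBasic, single_apply, ← Prod.mk_inj, Finset.sum_ite_eq]

lemma lamBasic_mul_single_mul (D : Finset (Fin n × Fin n))
    (e : Matrix (Fin n) (Fin n) R) (i j : Fin n) :
    lamBasic D (e * single i j 1 * e) = ∑ p ∈ D, e p.1 i * e j p.2 :=
  Finset.sum_congr rfl fun p _ => by
    rw [mul_apply, Fintype.sum_eq_single j fun m hm => by
      rw [mul_single_apply_of_ne _ _ _ _ _ hm, zero_mul], mul_single_apply_same, mul_one]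

lemma isStrictUT_single {i j : Fin n} (hij : i < j) (c : R) :
    IsStrictUT (single i j c) := by
  rintro a b hba
  exact single_apply_of_ne _ _ _ _ _ fun ⟨hia, hjb⟩ => (hia ▸ hjb ▸ hba).not_gt hij

end BasicSubset

section Regularity

variable {D : Finset (Fin n × Fin n)} {e : Matrix (Fin n) (Fin n) R}

lemma exists_isUT_idempotent_fixing_of_not_covered [Semiring R] [Nontrivial R] [DecidableEq R]
    {k : Fin n} (hk : ∀ p ∈ D, p.1 ≠ k ∧ p.2 ≠ k) :
    ∃ e : Matrix (Fin n) (Fin n) R, IsUT e ∧ e * e = e ∧ e ≠ 1 ∧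
      (e * xBasic D = xBasic D ∧ xBasic D * e = xBasic D) ∧
      ∀ x, lamBasic D (e * x * e) = lamBasic D x := by
  set d : Fin n → R := Function.update 1 k 0
  have hd : ∀ p ∈ D, d p.1 = 1 ∧ d p.2 = 1 := fun p hp =>
    ⟨Function.update_of_ne (hk p hp).1 _ _, Function.update_of_ne (hk p hp).2 _ _⟩
  refine ⟨diagonal d, fun i j hji => diagonal_apply_ne _ hji.ne', ?_, fun h => ?_,
    ⟨diagonal_mul_xBasic fun p hp => (hd p hp).1, xBasic_mul_diagonal fun p hp => (hd p hp).2⟩,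
    lamBasic_diagonal_mul_mul_diagonal hd⟩
  · rw [diagonal_mul_diagonal]
    congr 1
    funext i
    rcases eq_or_ne i k with rfl | hik <;> simp [d, *]
  · simpa [d] using congrFun (congrFun h k) k

lemma apply_self_eq_one_of_fixes_xBasic [Semiring R] [DecidableEq R] (hD : IsBasic D)
    (hl : e * xBasic D = xBasic D) (hr : xBasic D * e = xBasic D) {k : Fin n}
    (hk : ∃ p ∈ D, p.1 = k ∨ p.2 = k) : e k k = 1 := by
  obtain ⟨⟨a, b⟩, hab, rfl | rfl⟩ := hk
  · have h := congrFun (congrFun hl a) b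
    rwa [mul_xBasic_apply_of_mem hD hab, xBasic_apply, if_pos hab] at h
  · have h := congrFun (congrFun hr a) b
    rwa [xBasic_mul_apply_of_mem hD hab, xBasic_apply, if_pos hab] at h

lemma sum_apply_mul_apply_eq_of_lamBasic_eq [Semiring R]
    (hinv : ∀ x, IsStrictUT x → lamBasic D x = lamBasic D (e * x * e)) {i j : Fin n}
    (hij : i < j) : ∑ p ∈ D, e p.1 i * e j p.2 = if (i, j) ∈ D then 1 else 0 := by
  rw [← lamBasic_mul_single_mul, ← hinv _ (isStrictUT_single hij 1), lamBasic_single]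

lemma IsUT.sum_apply_mul_apply_eq_single [Semiring R] (hD : IsBasic D) (he : IsUT e)
    {c d i : Fin n} (hcd : (c, d) ∈ D) (hout : ∀ p ∈ D, d < p.2 → e p.1 i = 0) :
    ∑ p ∈ D, e p.1 i * e d p.2 = e c i * e d d := by
  refine Finset.sum_eq_single_of_mem (c, d) hcd fun p hp hpcd => ?_
  rcases lt_trichotomy p.2 d with hlt | heq | hgt
  · rw [he d p.2 hlt, mul_zero]
  · exact absurd (hD.2.2 p hp _ hcd heq) hpcd
  · rw [hout p hp hgt, zero_mul]

lemma IsUT.apply_self_eq_one_of_lamBasic_eq [CommRing R] (hD : IsBasic D) (he : IsUT e)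
    (hidem : IsIdempotentElem e)
    (hinv : ∀ x, IsStrictUT x → lamBasic D x = lamBasic D (e * x * e)) {k : Fin n}
    (hk : ∃ p ∈ D, p.1 = k ∨ p.2 = k) : e k k = 1 := by
  have key : ∀ d c, (c, d) ∈ D →
      e c c = 1 ∧ e d d = 1 ∧ ∀ q ∈ D, q.2 < d → e c q.1 = 0 := by
    intro d
    induction d using WellFoundedGT.induction with
    | ind d ih =>
      intro c hcd
      have hout : ∀ q ∈ D, q.2 ≤ d → ∀ p ∈ D, d < p.2 → e p.1 q.1 = 0 :=
        fun q hq hqd p hp hdp => (ih p.2 hdp p.1 hp).2.2 q hq (hqd.trans_lt hdp)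
      have hunit : e c c * e d d = 1 := by
        rw [← he.sum_apply_mul_apply_eq_single hD hcd (hout _ hcd le_rfl),
          sum_apply_mul_apply_eq_of_lamBasic_eq hinv (hD.1 _ hcd), if_pos hcd]
      have hdd : e d d = 1 :=
        he.apply_self_eq_one_of_mul_eq_one hidem ((mul_comm _ _).trans hunit)
      refine ⟨he.apply_self_eq_one_of_mul_eq_one hidem hunit, hdd, fun q hq hqd => ?_⟩
      -- `(q.1, d)` is a positive root outside `D`, since row `q.1` of `D` is taken by `q`.
      have hnot : (q.1, d) ∉ D := fun h => hqd.ne (congrArg Prod.snd (hD.2.1 _ hq _ h rfl))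
      have h := sum_apply_mul_apply_eq_of_lamBasic_eq hinv ((hD.1 q hq).trans hqd)
      rwa [if_neg hnot, he.sum_apply_mul_apply_eq_single hD hcd (hout q hq hqd.le), hdd,
        mul_one] at h
  obtain ⟨⟨c, d⟩, hcd, rfl | rfl⟩ := hk
  exacts [(key d c hcd).1, (key d c hcd).2.1]

end Regularity

end

theorem xBasic_lamBasic_regular_iff_general
    {F : Type*} [Field F] [DecidableEq F] {n : ℕ}
    (D : Finset (Fin n × Fin n)) (hD : IsBasic D) :
    ((¬ ∃ e : Matrix (Fin n) (Fin n) F, IsUT e ∧ e * e = e ∧ e ≠ 1 ∧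
        e * xBasic D = xBasic D ∧ xBasic D * e = xBasic D) ↔
      (∀ k : Fin n, ∃ p ∈ D, p.1 = k ∨ p.2 = k)) ∧
    ((¬ ∃ e : Matrix (Fin n) (Fin n) F, IsUT e ∧ e * e = e ∧ e ≠ 1 ∧
        ∀ x : Matrix (Fin n) (Fin n) F, IsStrictUT x →
          lamBasic D x = lamBasic D (e * x * e)) ↔
      (∀ k : Fin n, ∃ p ∈ D, p.1 = k ∨ p.2 = k)) := by
  have of_not_covered (hcov : ¬ ∀ k : Fin n, ∃ p ∈ D, p.1 = k ∨ p.2 = k) :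
      ∃ e : Matrix (Fin n) (Fin n) F, IsUT e ∧ e * e = e ∧ e ≠ 1 ∧
        (e * xBasic D = xBasic D ∧ xBasic D * e = xBasic D) ∧
        ∀ x, lamBasic D (e * x * e) = lamBasic D x := by
    push Not at hcov
    obtain ⟨k, hk⟩ := hcov
    exact exists_isUT_idempotent_fixing_of_not_covered hk
  refine ⟨⟨fun hreg => by_contra fun hcov => ?_, ?_⟩,
    ⟨fun hreg => by_contra fun hcov => ?_, ?_⟩⟩
  · obtain ⟨e, he, hidem, hne, hfix, -⟩ := of_not_covered hcov
    exact hreg ⟨e, he, hidem, hne, hfix⟩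
  · rintro hcov ⟨e, he, hidem, hne, hl, hr⟩
    exact hne (he.eq_one_of_isIdempotentElem hidem fun k =>
      apply_self_eq_one_of_fixes_xBasic hD hl hr (hcov k))
  · obtain ⟨e, he, hidem, hne, -, hinv⟩ := of_not_covered hcov
    exact hreg ⟨e, he, hidem, hne, fun x _ => (hinv x).symm⟩
  · rintro hcov ⟨e, he, hidem, hne, hinv⟩
    exact hne (he.eq_one_of_isIdempotentElem hidem fun k =>
      he.apply_self_eq_one_of_lamBasic_eq hD hidem hinv (hcov k))

/-- Lemma 5.1: for a basic subset `D`, (1) `x_D` is regular in `J` (there is no idempotent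
`e ≠ 1` of `A = t(n,F_q)` with `e x_D = x_D e = x_D`) iff `row(D) ∪ col(D) = {1,…,n}`;
(2) `λ_D` is regular in `J^*` (there is no idempotent `e ≠ 1` of `A` with
`λ_D(x) = λ_D(e x e)` for all `x ∈ J`) iff `row(D) ∪ col(D) = {1,…,n}`. -/
theorem xBasic_lamBasic_regular_iff
    {F : Type*} [Field F] [Fintype F] [DecidableEq F] {n : ℕ}
    (D : Finset (Fin n × Fin n)) (hD : IsBasic D) :
    ((¬ ∃ e : Matrix (Fin n) (Fin n) F, IsUT e ∧ e * e = e ∧ e ≠ 1 ∧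
        e * xBasic D = xBasic D ∧ xBasic D * e = xBasic D) ↔
      (∀ k : Fin n, ∃ p ∈ D, p.1 = k ∨ p.2 = k)) ∧
    ((¬ ∃ e : Matrix (Fin n) (Fin n) F, IsUT e ∧ e * e = e ∧ e ≠ 1 ∧
        ∀ x : Matrix (Fin n) (Fin n) F, IsStrictUT x →
          lamBasic D x = lamBasic D (e * x * e)) ↔
      (∀ k : Fin n, ∃ p ∈ D, p.1 = k ∨ p.2 = k)) :=
  xBasic_lamBasic_regular_iff_general D hD
end
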